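/- arXiv:2409.17890 — 5 statements merged into one kernel-verified Lean document; each statement's English description precedes it below -/
import Mathlib

section
/- Let q be a primitive n-th root of unity in an algebraically closed field of characteristic 0, and let m, r be integers with 0 < r < n and n ∣ m. Then the Gaussian binomial coefficient [m choose r]_q equals 0. -/
theorem stmt1 (K : Type*) [Field K] [IsAlgClosed K] [CharZero K]
    (n : ℕ) (q : K) (hq : IsPrimitiveRoot q n)
    (m r : ℕ) (hr : 0 < r) (hrn : r < n) (hm : n ∣ m) :
    (∏ i ∈ Finset.range r, (1 - q ^ (m - i))) /
      (∏ i ∈ Finset.range r, (1 - q ^ (i + 1))) = 0 := by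
  have hnum : (∏ i ∈ Finset.range r, (1 - q ^ (m - i))) = 0 := by
    apply Finset.prod_eq_zero (Finset.mem_range.mpr hr)
    obtain ⟨k, rfl⟩ := hm
    simp [pow_mul, hq.pow_eq_one]
  simp [hnum]
end

section
/- Let q be a primitive n-th root of unity and let m, r be non-negative integers with r < n. Then the Gaussian binomial coefficients satisfy [m+n choose r]_q = [m choose r]_q. -/
theorem stmt2 (K : Type*) [Field K] [CharZero K]
    (n : ℕ) (q : K) (hq : IsPrimitiveRoot q n)
    (m r : ℕ) (hrn : r < n) :
    (∏ i ∈ Finset.range r, (1 - q ^ (m + n - i))) /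
      (∏ i ∈ Finset.range r, (1 - q ^ (i + 1))) =
    (∏ i ∈ Finset.range r, (1 - q ^ (m - i))) /
      (∏ i ∈ Finset.range r, (1 - q ^ (i + 1))) := by
  have hq1 : q ^ n = 1 := hq.pow_eq_one
  congr 1
  rcases le_or_gt r m with h | h
  · apply Finset.prod_congr rfl
    intro i hi
    have hi' : i < r := Finset.mem_range.mp hi
    have : m + n - i = (m - i) + n := by omega
    rw [this, pow_add, hq1, mul_one]
  · have hm : m ∈ Finset.range r := Finset.mem_range.mpr h
    rw [Finset.prod_eq_zero hm (by simp [show m + n - m = n from by omega, hq1]),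
        Finset.prod_eq_zero hm (by simp)]
end

section
/- Let ω be a primitive n-th root of unity and 0 ≤ k ≤ n−1. Suppose integers i, j, i', j' satisfy (k+1)i + (2k+1)j ≡ 0 mod n and (k+1)i' + (2k+1)j' ≡ 0 mod n. Then i j' − j i' ≡ 0 mod n. -/
theorem stmt8 (n : ℕ) (hn : 2 ≤ n) (k : ℕ) (hk : k ≤ n - 1)
    (ω : ℂ) (hω : IsPrimitiveRoot ω n)
    (i j i' j' : ℤ)
    (h1 : (n : ℤ) ∣ ((k : ℤ) + 1) * i + (2 * (k : ℤ) + 1) * j)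
    (h2 : (n : ℤ) ∣ ((k : ℤ) + 1) * i' + (2 * (k : ℤ) + 1) * j') :
    (n : ℤ) ∣ i * j' - j * i' := by
  have ha : (n : ℤ) ∣ ((k : ℤ) + 1) * (i * j' - j * i') := by
    have := dvd_sub (h1.mul_left j') (h2.mul_left j)
    have heq : j' * (((k : ℤ) + 1) * i + (2 * (k : ℤ) + 1) * j)
        - j * (((k : ℤ) + 1) * i' + (2 * (k : ℤ) + 1) * j')
        = ((k : ℤ) + 1) * (i * j' - j * i') := by ring
    rwa [heq] at this
  have hb : (n : ℤ) ∣ (2 * (k : ℤ) + 1) * (i * j' - j * i') := by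
    have := dvd_sub (h2.mul_left i) (h1.mul_left i')
    have heq : i * (((k : ℤ) + 1) * i' + (2 * (k : ℤ) + 1) * j')
        - i' * (((k : ℤ) + 1) * i + (2 * (k : ℤ) + 1) * j)
        = (2 * (k : ℤ) + 1) * (i * j' - j * i') := by ring
    rwa [heq] at this
  have := dvd_sub (ha.mul_left 2) hb
  have heq : 2 * (((k : ℤ) + 1) * (i * j' - j * i'))
      - (2 * (k : ℤ) + 1) * (i * j' - j * i') = i * j' - j * i' := by ring
  rwa [heq] at this
end

section
/- Let H(t) = (1 − t^{n+4} − t^{4n} + t^{5n+4}) / ((1−t^4)(1−t^{(n/2)+2})(1−t^n)(1−t^{2n})²) where n ≥ 2 is even. Then H(t^{-1}) = −t^{(n/2)+2} · H(t) as rational functions over a field of characteristic 0. -/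
lemma aux_ne (K : Type*) [Field K] (k : ℕ) (hk : k ≠ 0) :
    (1 - RatFunc.X ^ k : RatFunc K) ≠ 0 := by
  have : (1 - RatFunc.X ^ k : RatFunc K) =
      algebraMap (Polynomial K) (RatFunc K) (1 - Polynomial.X ^ k) := by
    simp [RatFunc.algebraMap_X]
  rw [this]
  apply RatFunc.algebraMap_ne_zero
  intro h
  have := congrArg (fun p => Polynomial.coeff p k) h
  simp [Polynomial.coeff_one, hk] at this

theorem stmt13 (K : Type*) [Field K] [CharZero K] (n : ℕ) (hn : 2 ≤ n) (hne : Even n) :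
    (1 - ((RatFunc.X : RatFunc K)⁻¹) ^ (n + 4) - (RatFunc.X : RatFunc K)⁻¹ ^ (4 * n)
        + (RatFunc.X : RatFunc K)⁻¹ ^ (5 * n + 4)) /
        ((1 - (RatFunc.X : RatFunc K)⁻¹ ^ 4) * (1 - (RatFunc.X : RatFunc K)⁻¹ ^ (n / 2 + 2)) *
          (1 - (RatFunc.X : RatFunc K)⁻¹ ^ n) *
          (1 - (RatFunc.X : RatFunc K)⁻¹ ^ (2 * n)) ^ 2) =
    -(RatFunc.X : RatFunc K) ^ (n / 2 + 2) *
      ((1 - (RatFunc.X : RatFunc K) ^ (n + 4) - (RatFunc.X : RatFunc K) ^ (4 * n)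
          + (RatFunc.X : RatFunc K) ^ (5 * n + 4)) /
        ((1 - (RatFunc.X : RatFunc K) ^ 4) * (1 - (RatFunc.X : RatFunc K) ^ (n / 2 + 2)) *
          (1 - (RatFunc.X : RatFunc K) ^ n) *
          (1 - (RatFunc.X : RatFunc K) ^ (2 * n)) ^ 2)) := by
  obtain ⟨m, rfl⟩ := hne
  have hm : 1 ≤ m := by omega
  have hdiv : (m + m) / 2 = m := by omega
  rw [hdiv]
  set x : RatFunc K := RatFunc.X with hx
  have hX : x ≠ 0 := RatFunc.X_ne_zero
  have key : ∀ k : ℕ, x ^ k * x⁻¹ ^ k = 1 := fun k => by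
    rw [← mul_pow, mul_inv_cancel₀ hX, one_pow]
  have keyne : ∀ k : ℕ, k ≠ 0 → (1 - x⁻¹ ^ k) ≠ 0 := by
    intro k hk h
    apply aux_ne K k hk
    have h2 : (1 - x⁻¹ ^ k) * x ^ k = x ^ k - 1 := by
      rw [sub_mul, one_mul]; rw [mul_comm, key k]
    rw [h, zero_mul] at h2
    linear_combination h2
  have eN : 1 - x⁻¹ ^ ((m + m) + 4) - x⁻¹ ^ (4 * (m + m)) + x⁻¹ ^ (5 * (m + m) + 4)
      = x⁻¹ ^ (5 * (m + m) + 4) *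
        (1 - x ^ ((m + m) + 4) - x ^ (4 * (m + m)) + x ^ (5 * (m + m) + 4)) := by
    linear_combination -key (5 * (m + m) + 4) + x⁻¹ ^ (4 * (m + m)) * key ((m + m) + 4)
      + x⁻¹ ^ ((m + m) + 4) * key (4 * (m + m))
  have f : ∀ k : ℕ, (1 - x⁻¹ ^ k) = -(x⁻¹ ^ k) * (1 - x ^ k) := by
    intro k
    linear_combination -key k
  rw [eN, f 4, f (m + 2), f (m + m), f (2 * (m + m)), ← mul_div_assoc]
  have hD : ((1 - x ^ 4) * (1 - x ^ (m + 2)) * (1 - x ^ (m + m)) *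
      (1 - x ^ (2 * (m + m))) ^ 2) ≠ 0 := by
    refine mul_ne_zero (mul_ne_zero (mul_ne_zero ?_ ?_) ?_) (pow_ne_zero _ ?_) <;>
      exact aux_ne K _ (by omega)
  have hB : (-(x⁻¹ ^ 4) * (1 - x ^ 4) * (-(x⁻¹ ^ (m + 2)) * (1 - x ^ (m + 2))) *
      (-(x⁻¹ ^ (m + m)) * (1 - x ^ (m + m))) *
      (-(x⁻¹ ^ (2 * (m + m))) * (1 - x ^ (2 * (m + m)))) ^ 2) ≠ 0 := by
    refine mul_ne_zero (mul_ne_zero (mul_ne_zero (mul_ne_zero ?_ ?_) (mul_ne_zero ?_ ?_))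
      (mul_ne_zero ?_ ?_)) (pow_ne_zero _ (mul_ne_zero ?_ ?_)) <;>
      first
        | exact neg_ne_zero.mpr (pow_ne_zero _ (inv_ne_zero hX))
        | exact aux_ne K _ (by omega)
  rw [div_eq_div_iff hB hD]
  linear_combination -(x⁻¹ ^ (10 * m + 4) *
      (1 - x ^ ((m + m) + 4) - x ^ (4 * (m + m)) + x ^ (5 * (m + m) + 4)) *
      ((1 - x ^ 4) * (1 - x ^ (m + 2)) * (1 - x ^ (m + m)) *
        (1 - x ^ (2 * (m + m))) ^ 2)) * key (m + 2)
end

section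
/- Let H(t) = (1 − t^6 − t^7 − 2t^8 − t^9 + 2t^{11} + 2t^{12} + 2t^{13} + t^{14} − t^{15} − t^{16} − t^{17}) / ((1−t^2)(1−t^3)(1−t^4)³(1−t^5)). Then there is no integer m and no sign ε ∈ {1, −1} such that H(t^{-1}) = ε·t^m·H(t) as rational functions over ℚ. -/
noncomputable def stmt14N (t : RatFunc ℚ) : RatFunc ℚ :=
  1 - t ^ 6 - t ^ 7 - 2 * t ^ 8 - t ^ 9 + 2 * t ^ 11 + 2 * t ^ 12 + 2 * t ^ 13
    + t ^ 14 - t ^ 15 - t ^ 16 - t ^ 17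

noncomputable def stmt14D (t : RatFunc ℚ) : RatFunc ℚ :=
  (1 - t ^ 2) * (1 - t ^ 3) * (1 - t ^ 4) ^ 3 * (1 - t ^ 5)

open Polynomial

/-- The numerator polynomial. -/
noncomputable def s14Np : ℚ[X] :=
  1 - X ^ 6 - X ^ 7 - 2 * X ^ 8 - X ^ 9 + 2 * X ^ 11 + 2 * X ^ 12 + 2 * X ^ 13
    + X ^ 14 - X ^ 15 - X ^ 16 - X ^ 17

/-- Reverse of the numerator polynomial. -/
noncomputable def s14Ns : ℚ[X] :=
  -1 - X - X ^ 2 + X ^ 3 + 2 * X ^ 4 + 2 * X ^ 5 + 2 * X ^ 6 - X ^ 8 - 2 * X ^ 9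
    - X ^ 10 - X ^ 11 + X ^ 17

/-- The denominator polynomial. -/
noncomputable def s14Dp : ℚ[X] :=
  (1 - X ^ 2) * (1 - X ^ 3) * (1 - X ^ 4) ^ 3 * (1 - X ^ 5)

lemma s14Np_eval2 : s14Np.eval 2 = -185535 := by
  simp [s14Np]; norm_num

lemma s14Ns_eval2 : s14Ns.eval 2 = 126945 := by
  simp [s14Ns]; norm_num

lemma s14Dp_ne_zero : s14Dp ≠ 0 := by
  intro h
  have := congrArg (Polynomial.eval 0) h
  simp [s14Dp] at this

set_option maxHeartbeats 1000000 in
theorem stmt14 :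
    ¬ ∃ (m : ℤ) (ε : RatFunc ℚ), (ε = 1 ∨ ε = -1) ∧
      stmt14N (RatFunc.X)⁻¹ / stmt14D (RatFunc.X)⁻¹ =
        ε * (RatFunc.X : RatFunc ℚ) ^ m *
          (stmt14N RatFunc.X / stmt14D RatFunc.X) := by
  rintro ⟨m, ε, hε, heq⟩
  set x : RatFunc ℚ := RatFunc.X with hxdef
  have hx : x ≠ 0 := RatFunc.X_ne_zero
  have hx17 : x ^ 17 ≠ 0 := pow_ne_zero _ hx
  have hx22 : x ^ 22 ≠ 0 := pow_ne_zero _ hx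
  set Ns' : RatFunc ℚ := algebraMap ℚ[X] (RatFunc ℚ) s14Ns with hNs'
  set Np' : RatFunc ℚ := algebraMap ℚ[X] (RatFunc ℚ) s14Np with hNp'
  set Dp' : RatFunc ℚ := algebraMap ℚ[X] (RatFunc ℚ) s14Dp with hDp'
  have hDp'0 : Dp' ≠ 0 := by
    simp [hDp', RatFunc.algebraMap_ne_zero s14Dp_ne_zero]
  have hNs'eq : Ns' = -1 - x - x ^ 2 + x ^ 3 + 2 * x ^ 4 + 2 * x ^ 5 + 2 * x ^ 6
      - x ^ 8 - 2 * x ^ 9 - x ^ 10 - x ^ 11 + x ^ 17 := by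
    simp [hNs', s14Ns, map_add, map_sub, map_mul, map_pow, map_one, map_ofNat,
      RatFunc.algebraMap_X, hxdef]
  have hNp'eq : Np' = stmt14N x := by
    simp [hNp', s14Np, stmt14N, map_add, map_sub, map_mul, map_pow, map_one, map_ofNat,
      RatFunc.algebraMap_X, hxdef]
  have hDp'eq : Dp' = stmt14D x := by
    simp [hDp', s14Dp, stmt14D, map_add, map_sub, map_mul, map_pow, map_one,
      RatFunc.algebraMap_X, hxdef]
  -- cancellation helper
  have hpow : ∀ k : ℕ, k ≤ 17 → x⁻¹ ^ k * x ^ 17 = x ^ (17 - k) := by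
    intro k hk
    rw [inv_pow, pow_sub₀ x hx hk]
    ring
  -- reversal identity for the numerator
  have hA' : stmt14N x⁻¹ * x ^ 17 = Ns' := by
    rw [hNs'eq, stmt14N]
    linear_combination (-1 : RatFunc ℚ) * hpow 6 (by norm_num)
      - hpow 7 (by norm_num) - 2 * hpow 8 (by norm_num) - hpow 9 (by norm_num)
      + 2 * hpow 11 (by norm_num) + 2 * hpow 12 (by norm_num)
      + 2 * hpow 13 (by norm_num) + hpow 14 (by norm_num)
      - hpow 15 (by norm_num) - hpow 16 (by norm_num) - hpow 17 (by norm_num)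
  -- reversal identity for the denominator
  have hf : ∀ k : ℕ, (1 - x⁻¹ ^ k) * x ^ k = -(1 - x ^ k) := by
    intro k
    rw [sub_mul, one_mul, inv_pow, inv_mul_cancel₀ (pow_ne_zero k hx)]
    ring
  have hB' : stmt14D x⁻¹ * x ^ 22 = Dp' := by
    rw [hDp'eq, stmt14D, stmt14D]
    have : (1 - x⁻¹ ^ 2) * (1 - x⁻¹ ^ 3) * (1 - x⁻¹ ^ 4) ^ 3 * (1 - x⁻¹ ^ 5) * x ^ 22
        = ((1 - x⁻¹ ^ 2) * x ^ 2) * ((1 - x⁻¹ ^ 3) * x ^ 3) * ((1 - x⁻¹ ^ 4) * x ^ 4) ^ 3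
          * ((1 - x⁻¹ ^ 5) * x ^ 5) := by ring
    rw [this, hf 2, hf 3, hf 4, hf 5]
    ring
  have hA : stmt14N x⁻¹ = Ns' / x ^ 17 := by rw [eq_div_iff hx17]; exact hA'
  have hB : stmt14D x⁻¹ = Dp' / x ^ 22 := by rw [eq_div_iff hx22]; exact hB'
  have hLHS : stmt14N x⁻¹ / stmt14D x⁻¹ = x ^ 5 * Ns' / Dp' := by
    rw [hA, hB, div_div_div_eq, div_eq_div_iff (mul_ne_zero hx17 hDp'0) hDp'0]
    ring
  rw [hLHS, ← hNp'eq, ← hDp'eq] at heq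
  -- clear the denominator
  have h2 : x ^ 5 * Ns' = ε * x ^ m * Np' := by
    have := congrArg (· * Dp') heq
    rw [div_mul_cancel₀ _ hDp'0, mul_assoc, div_mul_cancel₀ _ hDp'0] at this
    exact this
  -- cancel x ^ 5
  have h3 : Ns' = ε * x ^ (m - 5) * Np' := by
    have hxm : (x : RatFunc ℚ) ^ m = x ^ ((5 : ℕ) : ℤ) * x ^ (m - 5) := by
      rw [← zpow_add₀ hx]
      norm_num
    rw [hxm, zpow_natCast] at h2
    exact mul_left_cancel₀ (pow_ne_zero 5 hx)
      (by linear_combination h2 :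
        x ^ (5 : ℕ) * Ns' = x ^ (5 : ℕ) * (ε * x ^ (m - 5) * Np'))
  rcases le_or_gt 0 (m - 5) with hm | hm
  · obtain ⟨d, hd⟩ := Int.eq_ofNat_of_zero_le hm
    rw [hd, zpow_natCast] at h3
    rcases hε with rfl | rfl
    · have hpoly : s14Ns = X ^ d * s14Np := by
        apply RatFunc.algebraMap_injective
        rw [map_mul, map_pow, RatFunc.algebraMap_X, ← hxdef, ← hNs', ← hNp', h3]
        ring
      have h5 := congrArg (Polynomial.eval 2) hpoly
      rw [s14Ns_eval2] at h5
      simp only [eval_mul, eval_pow, eval_X, s14Np_eval2] at h5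
      have h2d : (0:ℚ) < 2 ^ d := by positivity
      nlinarith [h5, h2d]
    · have hpoly : s14Ns = -(X ^ d * s14Np) := by
        apply RatFunc.algebraMap_injective
        rw [map_neg, map_mul, map_pow, RatFunc.algebraMap_X, ← hxdef, ← hNs', ← hNp', h3]
        ring
      have h5 := congrArg (Polynomial.eval 2) hpoly
      rw [s14Ns_eval2] at h5
      simp only [eval_neg, eval_mul, eval_pow, eval_X, s14Np_eval2] at h5
      have h2d : (1:ℚ) ≤ 2 ^ d := one_le_pow₀ (by norm_num)
      nlinarith [h5, h2d]
  · obtain ⟨d, hd⟩ := Int.eq_ofNat_of_zero_le (by omega : (0:ℤ) ≤ 5 - m)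
    have hd1 : 1 ≤ d := by omega
    have hneg : (x : RatFunc ℚ) ^ (m - 5) = (x ^ d)⁻¹ := by
      rw [show m - 5 = -(d : ℤ) by omega, zpow_neg, zpow_natCast]
    rw [hneg] at h3
    have h4 : x ^ d * Ns' = ε * Np' := by
      rw [h3, mul_comm ε, mul_assoc, ← mul_assoc (x ^ d),
        mul_inv_cancel₀ (pow_ne_zero d hx), one_mul, mul_comm]
    rcases hε with rfl | rfl
    · have hpoly : X ^ d * s14Ns = s14Np := by
        apply RatFunc.algebraMap_injective
        rw [map_mul, map_pow, RatFunc.algebraMap_X, ← hxdef, ← hNs', ← hNp']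
        linear_combination h4
      have h5 := congrArg (Polynomial.eval 2) hpoly
      rw [s14Np_eval2] at h5
      simp only [eval_mul, eval_pow, eval_X, s14Ns_eval2] at h5
      have h2d : (0:ℚ) < 2 ^ d := by positivity
      nlinarith [h5, h2d]
    · have hpoly : X ^ d * s14Ns = -s14Np := by
        apply RatFunc.algebraMap_injective
        rw [map_neg, map_mul, map_pow, RatFunc.algebraMap_X, ← hxdef, ← hNs', ← hNp']
        linear_combination h4
      have h5 := congrArg (Polynomial.eval 2) hpoly
      rw [eval_neg, s14Np_eval2] at h5
      simp only [eval_mul, eval_pow, eval_X, s14Ns_eval2] at h5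
      have h2d : (2:ℚ) ≤ 2 ^ d := by
        calc (2:ℚ) = 2 ^ 1 := by norm_num
        _ ≤ 2 ^ d := pow_le_pow_right₀ (by norm_num) hd1
      nlinarith [h5, h2d]
end
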